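/- arXiv:1803.10822 — 3 statements merged into one kernel-verified Lean document; each statement's English description precedes it below -/
import Mathlib

section
/- There is a constant C such that for every a in the open unit disc, the function f_a(z) = (1-|a|²)/(1-conj(a)·z)² satisfies sup over 0 ≤ r < 1 of (1/2π)∫₀^{2π} |f_a(r e^{iθ})| dθ ≤ C; that is, the H¹(U) norms of the family f_a are uniformly bounded. -/
open Complex MeasureTheory Metric Real

lemma pointwise_poisson (u : ℂ) (hu : (1:ℂ) - u ≠ 0) :
    (1 - ‖u‖^2) / ‖1 - u‖^2 = 1 + 2 * (u / (1-u)).re := by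
  have hD : Complex.normSq (1 - u) ≠ 0 := by
    simpa [Complex.normSq_eq_zero] using hu
  rw [Complex.div_re]
  have h1 : ‖u‖^2 = u.re^2 + u.im^2 := by
    rw [Complex.sq_norm, Complex.normSq_apply]; ring
  have h2 : ‖(1:ℂ) - u‖^2 = Complex.normSq (1 - u) := by
    rw [Complex.sq_norm]
  rw [h1, h2]
  have h3 : Complex.normSq (1 - u) = (1 - u.re)^2 + u.im^2 := by
    simp [Complex.normSq_apply]; ring
  rw [h3] at hD ⊢
  simp only [Complex.sub_re, Complex.sub_im, Complex.one_re, Complex.one_im]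
  field_simp
  ring

lemma integral_poisson (w : ℂ) (hw : ‖w‖ < 1) :
    ∫ θ in (0:ℝ)..(2*π), (1 - ‖w‖^2) / ‖1 - w * Complex.exp ((θ:ℂ) * Complex.I)‖^2 = 2*π := by
  have hne : ∀ θ : ℝ, (1:ℂ) - w * Complex.exp ((θ:ℂ) * Complex.I) ≠ 0 := by
    intro θ
    have h : ‖w * Complex.exp ((θ:ℂ) * Complex.I)‖ < 1 := by
      rw [norm_mul, Complex.norm_exp_ofReal_mul_I, mul_one]; exact hw
    intro h0
    rw [sub_eq_zero] at h0
    rw [← h0, norm_one] at h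
    exact lt_irrefl 1 h
  have hcm : ∀ θ : ℝ, circleMap 0 1 θ = Complex.exp ((θ:ℂ) * Complex.I) := by
    intro θ; simp [circleMap]
  -- the complex integral is 0
  have hg : Continuous fun θ : ℝ =>
      w * Complex.exp ((θ:ℂ) * Complex.I) / (1 - w * Complex.exp ((θ:ℂ) * Complex.I)) := by
    apply Continuous.div
    · exact continuous_const.mul (Complex.continuous_exp.comp (Complex.continuous_ofReal.mul continuous_const))
    · exact continuous_const.sub (continuous_const.mul (Complex.continuous_exp.comp (Complex.continuous_ofReal.mul continuous_const)))
    · exact hne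
  have hderiv : ∀ θ ∈ Set.uIcc (0:ℝ) (2*π), HasDerivAt
      (fun t : ℝ => Complex.I * Complex.log (1 - w * Complex.exp ((t:ℂ) * Complex.I)))
      (w * Complex.exp ((θ:ℂ) * Complex.I) / (1 - w * Complex.exp ((θ:ℂ) * Complex.I))) θ := by
    intro θ _
    have h1 : HasDerivAt (fun t : ℝ => (1:ℂ) - w * circleMap 0 1 t)
        (-(w * (circleMap 0 1 θ * Complex.I))) θ :=
      ((hasDerivAt_circleMap 0 1 θ).const_mul w).const_sub 1
    have hs : (1:ℂ) - w * circleMap 0 1 θ ∈ Complex.slitPlane := by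
      rw [Complex.mem_slitPlane_iff]
      left
      have : (w * circleMap 0 1 θ).re ≤ ‖w * circleMap 0 1 θ‖ := Complex.re_le_norm _
      have hn : ‖w * circleMap 0 1 θ‖ < 1 := by
        rw [norm_mul, hcm, Complex.norm_exp_ofReal_mul_I, mul_one]; exact hw
      simp only [Complex.sub_re, Complex.one_re]
      linarith
    have h2 := (h1.clog_real hs).const_mul Complex.I
    have heq : Complex.I * (-(w * (circleMap 0 1 θ * Complex.I)) / (1 - w * circleMap 0 1 θ))
        = w * Complex.exp ((θ:ℂ) * Complex.I) / (1 - w * Complex.exp ((θ:ℂ) * Complex.I)) := by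
      rw [hcm]
      have := hne θ
      field_simp
      ring_nf
      simp [Complex.I_sq]
    rw [heq] at h2
    simp only [hcm] at h2
    exact h2
  have hint0 : (∫ θ in (0:ℝ)..(2*π),
      w * Complex.exp ((θ:ℂ) * Complex.I) / (1 - w * Complex.exp ((θ:ℂ) * Complex.I))) = 0 := by
    rw [intervalIntegral.integral_eq_sub_of_hasDerivAt hderiv (hg.intervalIntegrable _ _)]
    have h2pi : Complex.exp (((2*π:ℝ):ℂ) * Complex.I) = 1 := by
      have := Complex.exp_int_mul_two_pi_mul_I 1
      push_cast at this ⊢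
      convert this using 2
      ring
    simp [h2pi]
  -- rewrite the real integrand
  have hcongr : ∀ θ ∈ Set.uIcc (0:ℝ) (2*π),
      (1 - ‖w‖^2) / ‖1 - w * Complex.exp ((θ:ℂ) * Complex.I)‖^2
      = 1 + 2 * ((w * Complex.exp ((θ:ℂ) * Complex.I)) /
          (1 - w * Complex.exp ((θ:ℂ) * Complex.I))).re := by
    intro θ _
    have hnm : ‖w * Complex.exp ((θ:ℂ) * Complex.I)‖ = ‖w‖ := by
      rw [norm_mul, Complex.norm_exp_ofReal_mul_I, mul_one]
    rw [← hnm]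
    exact pointwise_poisson _ (hne θ)
  rw [intervalIntegral.integral_congr hcongr]
  have hgre : Continuous fun θ : ℝ =>
      ((w * Complex.exp ((θ:ℂ) * Complex.I)) / (1 - w * Complex.exp ((θ:ℂ) * Complex.I))).re :=
    Complex.continuous_re.comp hg
  rw [intervalIntegral.integral_add (intervalIntegrable_const) ((hgre.intervalIntegrable _ _).const_mul (2:ℝ)),
    intervalIntegral.integral_const_mul]
  have : (∫ θ in (0:ℝ)..(2*π),
      ((w * Complex.exp ((θ:ℂ) * Complex.I)) / (1 - w * Complex.exp ((θ:ℂ) * Complex.I))).re) = 0 := by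
    have := Complex.reCLM.intervalIntegral_comp_comm (hg.intervalIntegrable (μ := volume) (0:ℝ) (2*π))
    simp only [Complex.reCLM_apply] at this
    rw [this, hint0]
    simp
  rw [this]
  simp

theorem uniform_H1_bound_fa :
    ∃ C : ℝ, ∀ a ∈ ball (0 : ℂ) 1, ∀ r ∈ Set.Ico (0 : ℝ) 1,
      (1 / (2 * π)) * ∫ θ in (0 : ℝ)..(2 * π),
          ‖((1 : ℂ) - (‖a‖ : ℂ) ^ 2) /
            (1 - (starRingEnd ℂ) a * ((r : ℂ) * Complex.exp ((θ : ℂ) * Complex.I))) ^ 2‖ ≤ C := by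
  use 1
  intro a ha r hr
  rw [mem_ball, dist_zero_right] at ha
  obtain ⟨hr0, hr1⟩ := hr
  set w : ℂ := (starRingEnd ℂ) a * (r : ℂ) with hw
  have hwn : ‖w‖ = ‖a‖ * r := by
    rw [hw, norm_mul, RingHomIsometric.norm_map, Complex.norm_real, Real.norm_eq_abs, _root_.abs_of_nonneg hr0]
  have hwlt : ‖w‖ < 1 := by
    rw [hwn]
    calc ‖a‖ * r ≤ ‖a‖ * 1 := by
          apply mul_le_mul_of_nonneg_left hr1.le (norm_nonneg a)
      _ < 1 := by rwa [mul_one]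
  have hne : ∀ θ : ℝ, (1:ℂ) - w * Complex.exp ((θ:ℂ) * Complex.I) ≠ 0 := by
    intro θ
    have h : ‖w * Complex.exp ((θ:ℂ) * Complex.I)‖ < 1 := by
      rw [norm_mul, Complex.norm_exp_ofReal_mul_I, mul_one]; exact hwlt
    intro h0
    rw [sub_eq_zero] at h0
    rw [← h0, norm_one] at h
    exact lt_irrefl 1 h
  clear_value w
  -- rewrite integrand
  have hptw : ∀ θ : ℝ,
      ‖((1 : ℂ) - (‖a‖ : ℂ) ^ 2) /
        (1 - (starRingEnd ℂ) a * ((r : ℂ) * Complex.exp ((θ : ℂ) * Complex.I))) ^ 2‖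
      = (1 - ‖a‖^2) / ‖1 - w * Complex.exp ((θ:ℂ) * Complex.I)‖^2 := by
    intro θ
    have hassoc : (starRingEnd ℂ) a * ((r : ℂ) * Complex.exp ((θ : ℂ) * Complex.I))
        = w * Complex.exp ((θ:ℂ) * Complex.I) := by rw [hw]; ring
    rw [hassoc, norm_div, norm_pow]
    congr 1
    have : ((1 : ℂ) - (‖a‖ : ℂ) ^ 2) = ((1 - ‖a‖^2 : ℝ) : ℂ) := by push_cast; ring
    rw [this, Complex.norm_real, Real.norm_eq_abs, _root_.abs_of_nonneg]
    nlinarith [norm_nonneg a]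
  simp only [hptw]
  have hbound : (∫ θ in (0 : ℝ)..(2 * π),
      (1 - ‖a‖^2) / ‖1 - w * Complex.exp ((θ:ℂ) * Complex.I)‖^2) ≤ 2 * π := by
    refine le_trans ?_ (integral_poisson w hwlt).le
    have hcont : Continuous fun θ : ℝ => ‖(1:ℂ) - w * Complex.exp ((θ:ℂ) * Complex.I)‖^2 := by
      apply Continuous.pow
      apply Continuous.norm
      exact continuous_const.sub (continuous_const.mul (Complex.continuous_exp.comp
        (Complex.continuous_ofReal.mul continuous_const)))
    have hd : ∀ θ : ℝ, (0:ℝ) < ‖(1:ℂ) - w * Complex.exp ((θ:ℂ) * Complex.I)‖^2 := by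
      intro θ
      exact pow_pos (norm_pos_iff.mpr (hne θ)) 2
    apply intervalIntegral.integral_mono_on (μ := volume) two_pi_pos.le
    · exact ((continuous_const.div hcont (fun θ => (hd θ).ne')).intervalIntegrable _ _)
    · exact ((continuous_const.div hcont (fun θ => (hd θ).ne')).intervalIntegrable _ _)
    · intro θ _
      have h1 : ‖w‖^2 ≤ ‖a‖^2 := by
        have h0 : ‖w‖ ≤ ‖a‖ := by
          rw [hwn]
          nlinarith [norm_nonneg a]
        exact pow_le_pow_left₀ (norm_nonneg w) h0 2
      gcongr
  calc (1 / (2 * π)) * ∫ θ in (0 : ℝ)..(2 * π),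
        (1 - ‖a‖^2) / ‖1 - w * Complex.exp ((θ:ℂ) * Complex.I)‖^2
      ≤ (1 / (2 * π)) * (2 * π) := by
        apply mul_le_mul_of_nonneg_left hbound
        positivity
    _ = 1 := by field_simp
end

section
/- The operator norms of the partial sum operators S_N on H¹(U) are not uniformly bounded: there is no constant C such that ‖S_N f‖_{H¹(U)} ≤ C‖f‖_{H¹(U)} for all N and all f ∈ H¹(U), where S_N f is the N-th partial sum of the Taylor series of f at 0. -/
open Complex MeasureTheory Metric Real Finset

set_option maxHeartbeats 1000000

def ppc (n m : ℕ) : ℕ :=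
  ((Finset.range (n+1) ×ˢ Finset.range (n+1)).filter (fun p => p.1 + p.2 = m)).card

lemma ppc_eq {n m : ℕ} (h : m ≤ n) : ppc n m = m + 1 := by
  have : ((Finset.range (n+1) ×ˢ Finset.range (n+1)).filter (fun p => p.1 + p.2 = m))
      = Finset.HasAntidiagonal.antidiagonal m := by
    ext p
    simp only [Finset.mem_filter, Finset.mem_product, Finset.mem_range,
      Finset.HasAntidiagonal.mem_antidiagonal]
    omega
  rw [ppc, this, Finset.Nat.card_antidiagonal]

lemma ppc_eq_zero {n m : ℕ} (h : 2*n < m) : ppc n m = 0 := by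
  rw [ppc, Finset.card_eq_zero]
  ext p
  simp only [Finset.mem_filter, Finset.mem_product, Finset.mem_range, Finset.notMem_empty,
    iff_false]
  omega

lemma ppE_sq (n : ℕ) (z : ℂ) :
    (∑ k ∈ Finset.range (n+1), z ^ k) ^ 2
      = ∑ m ∈ Finset.range (2*n+1), (ppc n m : ℂ) * z ^ m := by
  rw [sq, Finset.sum_mul_sum]
  rw [← Finset.sum_product' (f := fun j k => z ^ j * z ^ k)]
  have : ∀ p ∈ Finset.range (n+1) ×ˢ Finset.range (n+1),
      z ^ p.1 * z ^ p.2 = z ^ (p.1 + p.2) := by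
    intro p _; rw [pow_add]
  rw [Finset.sum_congr rfl this]
  have hcomp := Finset.sum_comp (s := Finset.range (n+1) ×ˢ Finset.range (n+1))
      (fun m => z ^ m) (fun p => p.1 + p.2)
  rw [hcomp]
  rw [Finset.sum_subset (s₁ := (Finset.range (n+1) ×ˢ Finset.range (n+1)).image
      (fun p => p.1 + p.2)) (s₂ := Finset.range (2*n+1))]
  · apply Finset.sum_congr rfl
    intro m _
    rw [nsmul_eq_mul]
    rfl
  · intro m hm
    simp only [Finset.mem_image, Finset.mem_product, Finset.mem_range] at hm
    obtain ⟨p, ⟨h1, h2⟩, rfl⟩ := hm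
    simp only [Finset.mem_range]
    omega
  · intro m _ hm
    have : ((Finset.range (n+1) ×ˢ Finset.range (n+1)).filter (fun p => p.1 + p.2 = m)) = ∅ := by
      ext p
      simp only [Finset.mem_filter, Finset.notMem_empty, iff_false, not_and]
      intro hp he
      exact hm (Finset.mem_image.mpr ⟨p, hp, he⟩)
    simp [this]

noncomputable def ppa (n m : ℕ) : ℂ := (ppc n m : ℂ) / ((n:ℂ)+1)

noncomputable def ppf (n : ℕ) (z : ℂ) : ℂ := (∑ k ∈ Finset.range (n+1), z ^ k) ^ 2 / ((n:ℂ)+1)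

lemma ppf_hasSum (n : ℕ) (z : ℂ) : HasSum (fun k => ppa n k * z ^ k) (ppf n z) := by
  have hs := hasSum_sum_of_ne_finset_zero (s := Finset.range (2*n+1))
      (f := fun k => ppa n k * z ^ k) (L := SummationFilter.unconditional ℕ) (by
        intro k hk
        simp only [Finset.mem_range, not_lt] at hk
        have : ppc n k = 0 := ppc_eq_zero (by omega)
        simp [ppa, this])
  have : ∑ m ∈ Finset.range (2*n+1), ppa n m * z ^ m = ppf n z := by
    rw [ppf, ppE_sq, Finset.sum_div]
    exact Finset.sum_congr rfl (fun m _ => by rw [ppa]; ring)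
  rwa [this] at hs

lemma ppf_diff (n : ℕ) : DifferentiableOn ℂ (ppf n) (ball (0 : ℂ) 1) := by
  unfold ppf
  apply DifferentiableOn.div_const
  apply DifferentiableOn.pow
  apply DifferentiableOn.fun_sum
  intro k _
  exact (differentiable_pow k).differentiableOn

lemma ramp (n : ℕ) (w : ℂ) :
    (∑ k ∈ Finset.range (n+1), ((k : ℂ)+1) * w ^ k) * (1-w)^2
      = 1 - ((n:ℂ)+2) * w^(n+1) + ((n:ℂ)+1) * w^(n+2) := by
  induction n with
  | zero => simp; ring
  | succ m ih =>
    rw [Finset.sum_range_succ, add_mul, ih]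
    push_cast
    ring

lemma exp_orth (j k : ℕ) :
    (∫ θ in (0:ℝ)..(2*π), Complex.exp ((((j:ℂ)-(k:ℂ))*I)*θ))
      = if j = k then ((2*π:ℝ):ℂ) else 0 := by
  by_cases h : j = k
  · subst h
    simp [intervalIntegral.integral_const]
  · rw [if_neg h]
    have hc : (((j:ℂ)-(k:ℂ))*I) ≠ 0 := by
      apply mul_ne_zero _ Complex.I_ne_zero
      intro he
      apply h
      have : ((j:ℤ):ℂ) = ((k:ℤ):ℂ) := by push_cast; push_cast at he; linear_combination he
      exact_mod_cast this
    rw [integral_exp_mul_complex hc]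
    have h1 : (((j:ℂ)-(k:ℂ))*I) * ((2*π:ℝ):ℂ) = ((((j:ℤ)-(k:ℤ)):ℤ):ℂ) * (2*π*I) := by
      push_cast; ring
    rw [h1, Complex.exp_int_mul_two_pi_mul_I]
    simp

lemma pointwise_sq (n : ℕ) (r θ : ℝ) :
    ‖∑ k ∈ Finset.range (n+1), ((r:ℂ) * Complex.exp ((θ:ℂ)*I)) ^ k‖^2
      = (∑ j ∈ Finset.range (n+1), ∑ k ∈ Finset.range (n+1),
          (r:ℂ)^(j+k) * Complex.exp ((((j:ℂ)-(k:ℂ))*I)*θ)).re := by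
  set E := ∑ k ∈ Finset.range (n+1), ((r:ℂ) * Complex.exp ((θ:ℂ)*I)) ^ k with hE
  have h1 : ‖E‖^2 = (E * (starRingEnd ℂ) E).re := by
    rw [Complex.mul_conj]
    simp [Complex.sq_norm]
  have hterm : ∀ j k : ℕ,
      ((r:ℂ) * Complex.exp ((θ:ℂ)*I)) ^ j * (starRingEnd ℂ) (((r:ℂ) * Complex.exp ((θ:ℂ)*I)) ^ k)
        = (r:ℂ)^(j+k) * Complex.exp ((((j:ℂ)-(k:ℂ))*I)*θ) := by
    intro j k
    rw [map_pow, map_mul, Complex.conj_ofReal, ← Complex.exp_conj, map_mul, Complex.conj_I,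
      Complex.conj_ofReal]
    rw [mul_pow, mul_pow, ← Complex.exp_nat_mul, ← Complex.exp_nat_mul]
    have : Complex.exp ((j:ℂ)*((θ:ℂ)*I)) * Complex.exp ((k:ℂ)*((θ:ℂ)*(-I)))
        = Complex.exp ((((j:ℂ)-(k:ℂ))*I)*θ) := by
      rw [← Complex.exp_add]; congr 1; ring
    rw [mul_mul_mul_comm, ← pow_add, this]
  have h2 : E * (starRingEnd ℂ) E = ∑ j ∈ Finset.range (n+1), ∑ k ∈ Finset.range (n+1),
      (r:ℂ)^(j+k) * Complex.exp ((((j:ℂ)-(k:ℂ))*I)*θ) := by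
    rw [hE, map_sum, Finset.sum_mul_sum]
    exact Finset.sum_congr rfl fun j _ => Finset.sum_congr rfl fun k _ => hterm j k
  rw [h1, h2]

lemma intE_sq (n : ℕ) (r : ℝ) :
    ∫ θ in (0:ℝ)..(2*π), ‖∑ k ∈ Finset.range (n+1), ((r:ℂ) * Complex.exp ((θ:ℂ)*I)) ^ k‖^2
      = 2*π * ∑ k ∈ Finset.range (n+1), r^(2*k) := by
  have hcont : ∀ j k : ℕ, Continuous (fun θ : ℝ =>
      (r:ℂ)^(j+k) * Complex.exp ((((j:ℂ)-(k:ℂ))*I)*θ)) := by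
    intro j k
    fun_prop
  set g : ℝ → ℂ := fun θ => ∑ j ∈ Finset.range (n+1), ∑ k ∈ Finset.range (n+1),
      (r:ℂ)^(j+k) * Complex.exp ((((j:ℂ)-(k:ℂ))*I)*θ) with hg
  have hgc : Continuous g := by
    apply continuous_finset_sum; intro j _; exact continuous_finset_sum _ fun k _ => hcont j k
  have hgi : IntervalIntegrable g MeasureTheory.volume 0 (2*π) := hgc.intervalIntegrable _ _
  have h1 : (∫ θ in (0:ℝ)..(2*π),
      ‖∑ k ∈ Finset.range (n+1), ((r:ℂ) * Complex.exp ((θ:ℂ)*I)) ^ k‖^2)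
      = (∫ θ in (0:ℝ)..(2*π), g θ).re := by
    have h0 : (∫ θ in (0:ℝ)..(2*π), (g θ).re) = (∫ θ in (0:ℝ)..(2*π), g θ).re := by
      simpa using Complex.reCLM.intervalIntegral_comp_comm hgi
    rw [← h0]
    exact intervalIntegral.integral_congr fun θ _ => pointwise_sq n r θ
  rw [h1]
  have h2 : (∫ θ in (0:ℝ)..(2*π), g θ)
      = ∑ j ∈ Finset.range (n+1), ∑ k ∈ Finset.range (n+1),
          (r:ℂ)^(j+k) * (if j = k then ((2*π:ℝ):ℂ) else 0) := by
    rw [hg, intervalIntegral.integral_finset_sum]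
    · apply Finset.sum_congr rfl; intro j _
      rw [intervalIntegral.integral_finset_sum]
      · apply Finset.sum_congr rfl; intro k _
        rw [intervalIntegral.integral_const_mul, exp_orth]
      · intro k _; exact ((hcont j k).intervalIntegrable _ _)
    · intro j _
      exact (continuous_finset_sum _ fun k _ => hcont j k).intervalIntegrable _ _
  rw [h2]
  have h3 : ∀ j ∈ Finset.range (n+1), ∑ k ∈ Finset.range (n+1),
      (r:ℂ)^(j+k) * (if j = k then ((2*π:ℝ):ℂ) else 0) = (r:ℂ)^(2*j) * ((2*π:ℝ):ℂ) := by
    intro j hj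
    rw [Finset.sum_eq_single j]
    · rw [if_pos rfl]; ring_nf
    · intro k _ hk; rw [if_neg (Ne.symm hk), mul_zero]
    · intro h; exact absurd hj h
  rw [Finset.sum_congr rfl h3]
  have : ∑ j ∈ Finset.range (n+1), (r:ℂ)^(2*j) * ((2*π:ℝ):ℂ)
      = (((2*π * ∑ k ∈ Finset.range (n+1), r^(2*k)) : ℝ) : ℂ) := by
    push_cast
    rw [Finset.mul_sum]
    apply Finset.sum_congr rfl
    intro k _; ring
  rw [this, Complex.ofReal_re]

lemma hyp3 (n : ℕ) (r : ℝ) (hr : r ∈ Set.Ico (0:ℝ) 1) :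
    (1/(2*π)) * ∫ θ in (0:ℝ)..(2*π),
        ‖ppf n ((r:ℂ) * Complex.exp ((θ:ℂ)*I))‖ ≤ 1 := by
  obtain ⟨hr0, hr1⟩ := hr
  have hnorm : ∀ θ : ℝ, ‖ppf n ((r:ℂ) * Complex.exp ((θ:ℂ)*I))‖
      = ‖∑ k ∈ Finset.range (n+1), ((r:ℂ) * Complex.exp ((θ:ℂ)*I)) ^ k‖^2 / ((n:ℝ)+1) := by
    intro θ
    rw [ppf, norm_div, norm_pow]
    congr 1
    have : ((n:ℂ)+1) = (((n+1:ℕ):ℝ):ℂ) := by push_cast; ring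
    rw [this, Complex.norm_real, Real.norm_natCast]
    push_cast; ring
  have h1 : (∫ θ in (0:ℝ)..(2*π), ‖ppf n ((r:ℂ) * Complex.exp ((θ:ℂ)*I))‖)
      = (2*π * ∑ k ∈ Finset.range (n+1), r^(2*k)) / ((n:ℝ)+1) := by
    rw [← intE_sq n r, ← intervalIntegral.integral_div]
    exact intervalIntegral.integral_congr fun θ _ => hnorm θ
  rw [h1]
  have hπ : (0:ℝ) < π := Real.pi_pos
  have hsum : ∑ k ∈ Finset.range (n+1), r^(2*k) ≤ (n:ℝ)+1 := by
    calc ∑ k ∈ Finset.range (n+1), r^(2*k) ≤ ∑ k ∈ Finset.range (n+1), (1:ℝ) := by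
          apply Finset.sum_le_sum
          intro k _
          exact pow_le_one₀ hr0 hr1.le
      _ = (n:ℝ)+1 := by simp
  have heq : 1/(2*π) * ((2*π * ∑ k ∈ Finset.range (n+1), r^(2*k))/((n:ℝ)+1))
      = (∑ k ∈ Finset.range (n+1), r^(2*k))/((n:ℝ)+1) := by
    field_simp
  rw [heq, div_le_one (by positivity)]
  exact hsum

lemma norm_one_sub_sq (r θ : ℝ) :
    ‖(1:ℂ) - (r:ℂ) * Complex.exp ((θ:ℂ)*I)‖^2 = 1 - 2*r*Real.cos θ + r^2 := by
  have h1 : (1:ℂ) - (r:ℂ) * Complex.exp ((θ:ℂ)*I)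
      = ((1 - r*Real.cos θ : ℝ):ℂ) + ((-(r*Real.sin θ) : ℝ):ℂ)*I := by
    rw [Complex.exp_mul_I, ← Complex.ofReal_cos, ← Complex.ofReal_sin]
    push_cast
    ring
  rw [h1]
  rw [Complex.sq_norm, Complex.normSq_add_mul_I]
  nlinarith [Real.sin_sq_add_cos_sq θ]

lemma delta_lower (r δ θ : ℝ) (hr0 : 1/2 ≤ r) (hr1 : r < 1) (hθ0 : 0 < θ) (hθ2 : θ ≤ π)
    (hδ0 : 0 ≤ δ) (hδsq : δ^2 = 1 - 2*r*Real.cos θ + r^2) : θ/3 ≤ δ := by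
  have hπ4 : π ≤ 4 := by linarith [Real.pi_le_four]
  have hπ0 : 0 < π := Real.pi_pos
  have hcos : Real.cos θ ≤ 1 - 2/π^2 * θ^2 :=
    Real.cos_le_one_sub_mul_cos_sq (by rw [abs_of_pos hθ0]; exact hθ2)
  have h2pi : θ^2/8 ≤ 2/π^2 * θ^2 := by
    have hπ2 : π^2 ≤ 16 := by nlinarith
    rw [div_mul_eq_mul_div, div_le_div_iff₀ (by norm_num) (by positivity)]
    nlinarith [sq_nonneg θ]
  have h1 : θ^2/8 ≤ δ^2 := by
    nlinarith [sq_nonneg (1-r),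
      mul_le_mul_of_nonneg_left hcos (by linarith : (0:ℝ) ≤ 2*r),
      mul_le_mul_of_nonneg_left h2pi (by linarith : (0:ℝ) ≤ 2*r),
      mul_nonneg (by linarith : (0:ℝ) ≤ r - 1/2) (sq_nonneg θ)]
  nlinarith

lemma delta_upper (r δ θ : ℝ) (hr0 : 1/2 ≤ r) (hr1 : r < 1) (hθ0 : 0 < θ) (h1r : 1 - r ≤ θ)
    (hδ0 : 0 ≤ δ) (hδsq : δ^2 = 1 - 2*r*Real.cos θ + r^2) : δ ≤ 2*θ := by
  have hcos2 : 1 - θ^2/2 ≤ Real.cos θ := Real.one_sub_sq_div_two_le_cos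
  have h1 : δ^2 ≤ (1-r)^2 + θ^2 := by
    nlinarith [mul_le_mul_of_nonneg_left hcos2 (by linarith : (0:ℝ) ≤ 2*r),
      mul_nonneg (by linarith : (0:ℝ) ≤ 1 - r) (sq_nonneg θ)]
  nlinarith

lemma final_est (nn δ θ tt : ℝ) (hnn : 0 < nn) (hθ : 0 < θ) (hδpos : 0 < δ)
    (hδ2θ : δ ≤ 2*θ) (hnnδ : 20/3 ≤ nn*δ) (hν : nn*δ/2 - 3/2 ≤ tt) :
    1/(8*θ) ≤ tt/δ^2/nn := by
  have key : 1/(8*θ) ≤ (nn*δ/2 - 3/2)/(δ^2*nn) := by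
    rw [div_le_div_iff₀ (by positivity) (by positivity)]
    nlinarith [mul_le_mul_of_nonneg_left hδ2θ (by positivity : (0:ℝ) ≤ nn*δ),
      mul_le_mul_of_nonneg_left hδ2θ (by norm_num : (0:ℝ) ≤ 12),
      mul_pos hnn hδpos]
  calc 1/(8*θ) ≤ (nn*δ/2 - 3/2)/(δ^2*nn) := key
    _ ≤ tt/(δ^2*nn) := by gcongr
    _ = tt/δ^2/nn := by rw [div_div]

lemma lower_pointwise (n : ℕ) (hn : 19 ≤ n) (θ : ℝ)
    (hθ1 : 20/((n:ℝ)+1) ≤ θ) (hθ2 : θ ≤ π) :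
    1/(8*θ) ≤ ‖∑ k ∈ Finset.range (n+1),
        ppa n k * (((1 - 1/(2*((n:ℝ)+1)) : ℝ):ℂ) * Complex.exp ((θ:ℂ)*I)) ^ k‖ := by
  have hnn20 : (20:ℝ) ≤ (n:ℝ)+1 := by
    have : (19:ℝ) ≤ (n:ℝ) := by exact_mod_cast hn
    linarith
  have hnnpos : (0:ℝ) < (n:ℝ)+1 := by linarith
  set r : ℝ := 1 - 1/(2*((n:ℝ)+1)) with hr
  have hr0 : (1/2 : ℝ) ≤ r := by
    rw [hr]
    have h40 : 1/(2*((n:ℝ)+1)) ≤ 1/(2*20:ℝ) := by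
      apply div_le_div_of_nonneg_left <;> linarith
    linarith
  have hr1 : r < 1 := by
    rw [hr]; have : 0 < 1/(2*((n:ℝ)+1)) := by positivity
    linarith
  have hθpos : 0 < θ := lt_of_lt_of_le (by positivity) hθ1
  have h1r : 1 - r ≤ θ := by
    rw [hr]
    have h40 : 1/(2*((n:ℝ)+1)) ≤ 20/((n:ℝ)+1) := by
      rw [div_le_div_iff₀ (by positivity) hnnpos]; nlinarith
    linarith
  have hrpow : (1/2:ℝ) ≤ r^(n+1) := by
    have hb := one_add_mul_le_pow (a := -(1/(2*((n:ℝ)+1))))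
      (by
        have h1 : 1/(2*((n:ℝ)+1)) ≤ 1 := by
          rw [div_le_one (by positivity)]; linarith
        linarith) (n+1)
    have he : (1:ℝ) + (n+1 : ℕ)*(-(1/(2*((n:ℝ)+1)))) = 1/2 := by
      push_cast
      field_simp
      ring
    rw [he] at hb
    calc (1/2:ℝ) ≤ (1 + -(1/(2*((n:ℝ)+1))))^(n+1) := hb
      _ = r^(n+1) := by rw [hr]; ring_nf
  clear_value r
  set w : ℂ := ((r:ℝ):ℂ) * Complex.exp ((θ:ℂ)*I) with hw
  set δ : ℝ := ‖(1:ℂ) - w‖ with hδ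
  have hδ0 : (0:ℝ) ≤ δ := norm_nonneg _
  have hδsq : δ^2 = 1 - 2*r*Real.cos θ + r^2 := norm_one_sub_sq r θ
  have hwnorm : ‖w‖ = r := by
    rw [hw, norm_mul, Complex.norm_exp_ofReal_mul_I, Complex.norm_real,
      Real.norm_of_nonneg (by linarith), mul_one]
  clear_value w δ
  have hδ3 : θ/3 ≤ δ := delta_lower r δ θ hr0 hr1 hθpos hθ2 hδ0 hδsq
  have hδpos : 0 < δ := lt_of_lt_of_le (by positivity) hδ3
  have hδ2θ : δ ≤ 2*θ := delta_upper r δ θ hr0 hr1 hθpos h1r hδ0 hδsq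
  have hnnδ : 20/3 ≤ ((n:ℝ)+1)*δ := by
    have h2 : ((n:ℝ)+1) * (θ/3) ≤ ((n:ℝ)+1)*δ :=
      mul_le_mul_of_nonneg_left hδ3 (le_of_lt hnnpos)
    have h3 : ((n:ℝ)+1) * (20/((n:ℝ)+1)/3) ≤ ((n:ℝ)+1)*(θ/3) := by
      apply mul_le_mul_of_nonneg_left _ (le_of_lt hnnpos)
      linarith [hθ1]
    have h4 : ((n:ℝ)+1) * (20/((n:ℝ)+1)/3) = 20/3 := by field_simp
    linarith
  have h1w : (1:ℂ) - w ≠ 0 := by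
    intro h
    rw [hδ, h, norm_zero] at hδpos
    exact lt_irrefl 0 hδpos
  have hncast : ((n:ℂ)+1) = ((((n:ℝ)+1):ℝ):ℂ) := by push_cast; ring
  have hnnorm : ‖((n:ℂ)+1)‖ = (n:ℝ)+1 := by
    rw [hncast, Complex.norm_real, Real.norm_of_nonneg (le_of_lt hnnpos)]
  have hsum : ∑ k ∈ Finset.range (n+1), ppa n k * w^k
      = (∑ k ∈ Finset.range (n+1), ((k:ℂ)+1) * w^k)/((n:ℂ)+1) := by
    rw [Finset.sum_div]
    apply Finset.sum_congr rfl
    intro k hk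
    rw [ppa, ppc_eq (by simpa [Nat.lt_succ_iff] using hk)]
    push_cast
    ring
  have hT : ∑ k ∈ Finset.range (n+1), ((k:ℂ)+1) * w^k
      = (1 - ((n:ℂ)+2)*w^(n+1) + ((n:ℂ)+1)*w^(n+2))/(1-w)^2 := by
    rw [eq_div_iff (pow_ne_zero 2 h1w)]
    exact ramp n w
  set T : ℂ := 1 - ((n:ℂ)+2)*w^(n+1) + ((n:ℂ)+1)*w^(n+2) with hTT
  have hnormS : ‖∑ k ∈ Finset.range (n+1), ppa n k * w^k‖ = ‖T‖/δ^2/((n:ℝ)+1) := by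
    rw [hsum, hT, norm_div, norm_div, norm_pow, hnnorm, hδ]
  have hAB : r^(n+1) * (((n:ℝ)+1)*δ - 1) ≤ ‖((n:ℂ)+2)*w^(n+1) - ((n:ℂ)+1)*w^(n+2)‖ := by
    have hfac : ((n:ℂ)+2)*w^(n+1) - ((n:ℂ)+1)*w^(n+2)
        = w^(n+1) * (((n:ℂ)+1)*(1-w) + 1) := by ring
    rw [hfac, norm_mul, norm_pow, hwnorm]
    have h3 : ‖((n:ℂ)+1)*(1-w)‖ - ‖(-1:ℂ)‖ ≤ ‖((n:ℂ)+1)*(1-w) - (-1)‖ :=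
      norm_sub_norm_le _ _
    rw [sub_neg_eq_add, norm_neg, norm_one, norm_mul, hnnorm, ← hδ] at h3
    have hrp : (0:ℝ) ≤ r^(n+1) := by positivity
    exact mul_le_mul_of_nonneg_left (by linarith) hrp
  have hTnum : r^(n+1)*(((n:ℝ)+1)*δ-1) - 1 ≤ ‖T‖ := by
    have h3 : ‖((n:ℂ)+2)*w^(n+1) - ((n:ℂ)+1)*w^(n+2)‖ - ‖(1:ℂ)‖
        ≤ ‖(((n:ℂ)+2)*w^(n+1) - ((n:ℂ)+1)*w^(n+2)) - 1‖ := norm_sub_norm_le _ _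
    have h4 : (((n:ℂ)+2)*w^(n+1) - ((n:ℂ)+1)*w^(n+2)) - 1 = -T := by rw [hTT]; ring
    rw [h4, norm_neg, norm_one] at h3
    linarith
  have hν : ((n:ℝ)+1)*δ/2 - 3/2 ≤ ‖T‖ := by
    have hr2 : r^(n+1) ≤ 1 := pow_le_one₀ (by linarith) (le_of_lt hr1)
    nlinarith [hTnum, hrpow, hnnδ, hδpos, mul_pos hnnpos hδpos]
  rw [hnormS]
  exact final_est ((n:ℝ)+1) δ θ (‖T‖) hnnpos hθpos hδpos hδ2θ hnnδ hν

lemma integral_lower (n : ℕ) (hn : 19 ≤ n) :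
    (Real.log π - Real.log (20/((n:ℝ)+1)))/8
      ≤ ∫ θ in (0:ℝ)..(2*π), ‖∑ k ∈ Finset.range (n+1),
          ppa n k * (((1 - 1/(2*((n:ℝ)+1)) : ℝ):ℂ) * Complex.exp ((θ:ℂ)*I)) ^ k‖ := by
  have hnn20 : (20:ℝ) ≤ (n:ℝ)+1 := by
    have : (19:ℝ) ≤ (n:ℝ) := by exact_mod_cast hn
    linarith
  have hπ0 : 0 < π := Real.pi_pos
  have hπ1 : (1:ℝ) ≤ π := by linarith [Real.pi_gt_three]
  set a₀ : ℝ := 20/((n:ℝ)+1) with ha₀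
  have ha₀pos : 0 < a₀ := by positivity
  have ha₀1 : a₀ ≤ 1 := by
    rw [ha₀, div_le_one (by positivity)]; linarith
  set F : ℝ → ℝ := fun θ => ‖∑ k ∈ Finset.range (n+1),
      ppa n k * (((1 - 1/(2*((n:ℝ)+1)) : ℝ):ℂ) * Complex.exp ((θ:ℂ)*I)) ^ k‖ with hF
  have hFc : Continuous F := by
    apply Continuous.norm
    apply continuous_finset_sum
    intro k _
    fun_prop
  have h1 : (∫ θ in a₀..π, (1/8) * (1/θ)) ≤ ∫ θ in a₀..π, F θ := by
    apply intervalIntegral.integral_mono_on (by linarith)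
    · apply ContinuousOn.intervalIntegrable
      apply ContinuousOn.mul continuousOn_const
      apply ContinuousOn.div continuousOn_const continuousOn_id
      intro x hx
      rw [Set.uIcc_of_le (by linarith : a₀ ≤ π)] at hx
      exact ne_of_gt (lt_of_lt_of_le ha₀pos hx.1)
    · exact hFc.intervalIntegrable _ _
    · intro θ hθ
      have h := lower_pointwise n hn θ (by rw [← ha₀]; exact hθ.1) hθ.2
      calc (1/8) * (1/θ) = 1/(8*θ) := by ring
        _ ≤ F θ := h
  have h2 : (∫ θ in a₀..π, F θ) ≤ ∫ θ in (0:ℝ)..(2*π), F θ := by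
    apply intervalIntegral.integral_mono_interval (le_of_lt ha₀pos) (by linarith) (by linarith)
    · filter_upwards with x using (hF ▸ norm_nonneg _)
    · exact hFc.intervalIntegrable _ _
  have h3 : (∫ θ in a₀..π, (1/8) * (1/θ)) = (Real.log π - Real.log a₀)/8 := by
    rw [intervalIntegral.integral_const_mul, integral_one_div]
    · rw [Real.log_div (by positivity) (ne_of_gt ha₀pos)]
      ring
    · intro hx
      rw [Set.uIcc_of_le (by linarith : a₀ ≤ π)] at hx
      exact absurd hx.1 (by simpa using ha₀pos)
  calc (Real.log π - Real.log a₀)/8 = ∫ θ in a₀..π, (1/8) * (1/θ) := h3.symm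
    _ ≤ ∫ θ in a₀..π, F θ := h1
    _ ≤ ∫ θ in (0:ℝ)..(2*π), F θ := h2

theorem partial_sums_not_uniformly_bounded_H1 :
    ¬ ∃ C : ℝ, ∀ (N : ℕ) (f : ℂ → ℂ) (a : ℕ → ℂ) (M : ℝ),
        DifferentiableOn ℂ f (ball (0 : ℂ) 1) →
        (∀ z ∈ ball (0 : ℂ) 1, HasSum (fun k => a k * z ^ k) (f z)) →
        (∀ r ∈ Set.Ico (0 : ℝ) 1,
          (1 / (2 * π)) * ∫ θ in (0 : ℝ)..(2 * π),
              ‖f ((r : ℂ) * Complex.exp ((θ : ℂ) * Complex.I))‖ ≤ M) →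
        ∀ r ∈ Set.Ico (0 : ℝ) 1,
          (1 / (2 * π)) * ∫ θ in (0 : ℝ)..(2 * π),
              ‖∑ k ∈ Finset.range (N + 1),
                  a k * ((r : ℂ) * Complex.exp ((θ : ℂ) * Complex.I)) ^ k‖ ≤ C * M := by
  rintro ⟨C, hC⟩
  have hπ0 : 0 < π := Real.pi_pos
  obtain ⟨n, hnB⟩ := exists_nat_ge (max 19 (20 * Real.exp (16*π*|C| + 1)))
  have hn19 : 19 ≤ n := by
    have h1 : (19:ℝ) ≤ (n:ℝ) := le_trans (le_max_left _ _) hnB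
    exact_mod_cast h1
  have hnexp : 20 * Real.exp (16*π*|C| + 1) ≤ (n:ℝ) := le_trans (le_max_right _ _) hnB
  have hnn20 : (20:ℝ) ≤ (n:ℝ)+1 := by
    have : (19:ℝ) ≤ (n:ℝ) := by exact_mod_cast hn19
    linarith
  have hr₀mem : (1 - 1/(2*((n:ℝ)+1))) ∈ Set.Ico (0:ℝ) 1 := by
    constructor
    · have h1 : 1/(2*((n:ℝ)+1)) ≤ 1 := by
        rw [div_le_one (by positivity)]; linarith
      linarith
    · have h2 : 0 < 1/(2*((n:ℝ)+1)) := by positivity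
      linarith
  have happ := hC n (ppf n) (ppa n) 1 (ppf_diff n) (fun z _ => ppf_hasSum n z)
    (fun r hr => hyp3 n r hr) (1 - 1/(2*((n:ℝ)+1))) hr₀mem
  rw [mul_one] at happ
  have hlow := integral_lower n hn19
  set L : ℝ := Real.log π - Real.log (20/((n:ℝ)+1)) with hL
  have hLbound : 16*π*|C| + 1 ≤ L := by
    have e1 : Real.log (20/((n:ℝ)+1)) = Real.log 20 - Real.log ((n:ℝ)+1) :=
      Real.log_div (by norm_num) (by positivity)
    have e2 : (0:ℝ) ≤ Real.log π := Real.log_nonneg (by linarith [Real.pi_gt_three])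
    have e3 : Real.exp (16*π*|C|+1) ≤ ((n:ℝ)+1)/20 := by
      rw [le_div_iff₀ (by norm_num : (0:ℝ) < 20)]
      nlinarith [Real.exp_pos (16*π*|C|+1)]
    have e4 : 16*π*|C|+1 ≤ Real.log (((n:ℝ)+1)/20) :=
      (Real.le_log_iff_exp_le (by positivity)).mpr e3
    have e5 : Real.log (((n:ℝ)+1)/20) = Real.log ((n:ℝ)+1) - Real.log 20 :=
      Real.log_div (by positivity) (by norm_num)
    rw [hL, e1]
    rw [e5] at e4
    linarith
  have k1 : (1/(2*π)) * (L/8) ≤ (1/(2*π)) * (∫ θ in (0:ℝ)..(2*π),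
      ‖∑ k ∈ Finset.range (n+1),
        ppa n k * (((1 - 1/(2*((n:ℝ)+1)) : ℝ):ℂ) * Complex.exp ((θ:ℂ)*I)) ^ k‖) := by
    apply mul_le_mul_of_nonneg_left _ (by positivity)
    exact hlow
  have k2 : |C| + 1/(16*π) ≤ (1/(2*π)) * (L/8) := by
    have e6 : |C| + 1/(16*π) = (16*π*|C|+1)/(16*π) := by field_simp
    have e7 : (1/(2*π)) * (L/8) = L/(16*π) := by ring
    rw [e6, e7]
    gcongr
  have k3 : C ≤ C := le_refl C
  have := le_abs_self C
  have h16 : 0 < 1/(16*π) := by positivity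
  linarith [happ, k1, k2]
end

section
/- For every f ∈ H¹(U) with Taylor series f(z) = Σ_{k≥0} a_k z^k, the partial sums S_N f(z) = Σ_{k=0}^N a_k z^k converge to f in the Bergman norm: ∫_U |S_N f - f| dV → 0 as N → ∞. -/
open Complex MeasureTheory Metric Real Filter

open Set
open scoped ENNReal NNReal

lemma lintegral_ball_comp_mul (c : ℂ) (hc : c ≠ 0) {g : ℂ → ℝ≥0∞} (hg : Measurable g) :
    ∫⁻ z in ball (0:ℂ) ‖c‖, g z
      = ENNReal.ofReal (‖c‖^2) * ∫⁻ w in ball (0:ℂ) 1, g (c * w) := by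
  set r : ℝ := ‖c‖ with hr
  have hr0 : 0 < r := norm_pos_iff.2 hc
  have hrc : (r : ℂ) ≠ 0 := by exact_mod_cast (norm_pos_iff.2 hc).ne'
  have hu : (c / r : ℂ) ∈ Submonoid.unitSphere ℂ := by
    simp only [Submonoid.unitSphere, Submonoid.mem_mk, Subsemigroup.mem_mk,
      mem_sphere_zero_iff_norm]
    rw [norm_div, Complex.norm_real, Real.norm_of_nonneg hr0.le, ← hr, div_self hr0.ne']
  set u : Circle := ⟨c / r, hu⟩ with hudef
  have huc : (u : ℂ) = c / r := rfl
  have hT : (fun w : ℂ => c * w) = (rotation u) ∘ (fun w : ℂ => r • w) := by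
    funext w
    simp only [Function.comp_apply, rotation_apply, huc, Complex.real_smul]
    rw [div_mul_eq_mul_div, eq_div_iff hrc]
    ring
  have hmap : Measure.map (fun w : ℂ => c * w) volume
      = ENNReal.ofReal ((r ^ 2)⁻¹) • volume := by
    rw [hT, ← Measure.map_map (rotation u).continuous.measurable
      (by exact (continuous_const_smul r).measurable)]
    rw [MeasureTheory.Measure.map_addHaar_smul volume hr0.ne']
    rw [Measure.map_smul]
    rw [(rotation u).measurePreserving.map_eq]
    congr 1
    rw [Complex.finrank_real_complex, _root_.abs_of_nonneg (by positivity)]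
  have hpre : (fun w : ℂ => c * w) ⁻¹' (ball (0:ℂ) r) = ball (0:ℂ) 1 := by
    ext w
    simp only [Set.mem_preimage, mem_ball_zero_iff, norm_mul]
    rw [← hr]
    constructor
    · intro h
      nlinarith [norm_nonneg w]
    · intro h
      nlinarith [norm_nonneg w, hr0]
  have key : ∫⁻ w in ball (0:ℂ) 1, g (c * w)
      = ENNReal.ofReal ((r ^ 2)⁻¹) * ∫⁻ z in ball (0:ℂ) r, g z := by
    have h1 : ∫⁻ z, (ball (0:ℂ) r).indicator g z ∂(Measure.map (fun w : ℂ => c * w) volume)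
        = ∫⁻ w, (ball (0:ℂ) r).indicator g ((fun w : ℂ => c * w) w) ∂volume :=
      lintegral_map (hg.indicator measurableSet_ball)
        (by exact (continuous_mul_left c).measurable)
    rw [hmap] at h1
    rw [lintegral_smul_measure, lintegral_indicator measurableSet_ball] at h1
    have h2 : ∀ w : ℂ, (ball (0:ℂ) r).indicator g (c * w)
        = (ball (0:ℂ) 1).indicator (fun w => g (c * w)) w := by
      intro w
      rw [← hpre]
      simp [Set.indicator, Set.mem_preimage]
    simp only [h2] at h1
    rw [lintegral_indicator measurableSet_ball] at h1
    exact h1.symm.trans rfl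
  rw [key, ← mul_assoc, ← ENNReal.ofReal_mul (by positivity)]
  rw [mul_inv_cancel₀ (by positivity), ENNReal.ofReal_one, one_mul]

lemma lintegral_inv_norm_lt_top :
    ∫⁻ v in ball (0:ℂ) 2, ENNReal.ofReal (‖v‖⁻¹) < ⊤ := by
  set g : ℂ → ℝ≥0∞ := fun v => ENNReal.ofReal (‖v‖⁻¹) with hg
  set A : ℕ → Set ℂ := fun n => {v : ℂ | (1/2:ℝ)^n ≤ ‖v‖} ∩ ball (0:ℂ) (2 * (1/2:ℝ)^n) with hA
  have hcover : ball (0:ℂ) 2 \ {0} ⊆ ⋃ n, A n := by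
    intro v hv
    obtain ⟨hv2, hv0⟩ := hv
    have hv0' : 0 < ‖v‖ := norm_pos_iff.2 (by simpa using hv0)
    have hex : ∃ n : ℕ, (1/2:ℝ)^n ≤ ‖v‖ := by
      obtain ⟨n, hn⟩ := exists_pow_lt_of_lt_one hv0' (by norm_num : (1/2:ℝ) < 1)
      exact ⟨n, hn.le⟩
    classical
    set n := Nat.find hex with hn
    refine Set.mem_iUnion.2 ⟨n, ⟨Nat.find_spec hex, ?_⟩⟩
    rw [mem_ball_zero_iff]
    rcases Nat.eq_zero_or_pos n with h0 | hpos
    · rw [h0]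
      simpa using (mem_ball_zero_iff.1 hv2)
    · have hlt := Nat.find_min hex (m := n - 1) (by omega)
      push_neg at hlt
      have hsplit : (1/2:ℝ)^n = (1/2:ℝ)^(n-1) * (1/2) := by
        rw [← pow_succ]
        congr 1
        omega
      linarith [hlt]
  have hbound : ∀ n, ∫⁻ v in A n, g v
      ≤ ENNReal.ofReal (4 * (1/2:ℝ)^n) * volume (ball (0:ℂ) 1) := by
    intro n
    have h1 : ∫⁻ v in A n, g v ≤ ∫⁻ _ in A n, ENNReal.ofReal ((2:ℝ)^n) := by
      refine setLIntegral_mono (by fun_prop) ?_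
      intro v hv
      refine ENNReal.ofReal_le_ofReal ?_
      have h2 : (1/2:ℝ)^n ≤ ‖v‖ := hv.1
      have h3 : (0:ℝ) < (1/2:ℝ)^n := by positivity
      have h4 : ‖v‖⁻¹ ≤ ((1/2:ℝ)^n)⁻¹ := inv_anti₀ h3 h2
      refine h4.trans_eq ?_
      rw [one_div, inv_pow, inv_inv]
    refine h1.trans ?_
    rw [setLIntegral_const]
    have hA2 : volume (A n) ≤ volume (ball (0:ℂ) (2 * (1/2:ℝ)^n)) :=
      measure_mono Set.inter_subset_right
    have hball : volume (ball (0:ℂ) (2 * (1/2:ℝ)^n))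
        = ENNReal.ofReal ((2 * (1/2:ℝ)^n)^2) * volume (ball (0:ℂ) 1) := by
      rw [Measure.addHaar_ball volume _ (by positivity), Complex.finrank_real_complex]
    calc ENNReal.ofReal ((2:ℝ)^n) * volume (A n)
        ≤ ENNReal.ofReal ((2:ℝ)^n) * (ENNReal.ofReal ((2 * (1/2:ℝ)^n)^2) * volume (ball (0:ℂ) 1)) := by
          rw [← hball]
          exact mul_le_mul_right hA2 _
      _ = ENNReal.ofReal (4 * (1/2:ℝ)^n) * volume (ball (0:ℂ) 1) := by
          rw [← mul_assoc, ← ENNReal.ofReal_mul (by positivity)]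
          congr 2
          have h : ((1/2:ℝ))^n = ((2:ℝ)^n)⁻¹ := by rw [one_div, inv_pow]
          rw [h, mul_pow]
          have h2 : (0:ℝ) < (2:ℝ)^n := by positivity
          field_simp
          ring
  calc ∫⁻ v in ball (0:ℂ) 2, g v = ∫⁻ v in ball (0:ℂ) 2 \ {0}, g v := by
        refine (setLIntegral_congr ?_).symm
        refine (MeasureTheory.diff_ae_eq_self).2 ?_
        exact measure_mono_null Set.inter_subset_right (measure_singleton 0)
    _ ≤ ∫⁻ v in ⋃ n, A n, g v := lintegral_mono_set hcover
    _ ≤ ∑' n, ∫⁻ v in A n, g v := lintegral_iUnion_le _ _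
    _ ≤ ∑' n, ENNReal.ofReal (4 * (1/2:ℝ)^n) * volume (ball (0:ℂ) 1) :=
        ENNReal.tsum_le_tsum hbound
    _ < ⊤ := by
        have hvol : volume (ball (0:ℂ) 1) < ⊤ := measure_ball_lt_top
        have heq : ∀ n : ℕ, ENNReal.ofReal (4 * (1/2:ℝ)^n)
            = ENNReal.ofReal 4 * (ENNReal.ofReal (1/2:ℝ))^n := by
          intro n
          rw [← ENNReal.ofReal_pow (by norm_num), ← ENNReal.ofReal_mul (by norm_num)]
        simp_rw [heq, mul_assoc]
        rw [ENNReal.tsum_mul_left]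
        refine ENNReal.mul_lt_top ENNReal.ofReal_lt_top ?_
        rw [ENNReal.tsum_mul_right]
        refine ENNReal.mul_lt_top ?_ hvol
        rw [ENNReal.tsum_geometric]
        refine ENNReal.inv_lt_top.2 ?_
        rw [tsub_pos_iff_lt]
        exact ENNReal.ofReal_lt_one.2 (by norm_num)

lemma lintegral_inv_norm_one_sub_lt_top :
    ∫⁻ w in ball (0:ℂ) 1, ENNReal.ofReal (‖1 - w‖⁻¹) < ⊤ := by
  have hsub : ball (0:ℂ) 1 ⊆ (fun w : ℂ => w - 1) ⁻¹' (ball (0:ℂ) 2) := by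
    intro w hw
    rw [mem_ball_zero_iff] at hw
    simp only [Set.mem_preimage, mem_ball_zero_iff]
    calc ‖w - 1‖ ≤ ‖w‖ + 1 := by simpa using norm_sub_le w 1
      _ < 2 := by linarith
  have hmp : MeasurePreserving (fun w : ℂ => w - 1) volume volume := by
    simpa [sub_eq_add_neg] using measurePreserving_add_right (volume : Measure ℂ) (-1)
  have hemb : MeasurableEmbedding (fun w : ℂ => w - 1) :=
    (MeasurableEquiv.subRight (1:ℂ)).measurableEmbedding
  calc ∫⁻ w in ball (0:ℂ) 1, ENNReal.ofReal (‖1 - w‖⁻¹)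
      ≤ ∫⁻ w in (fun w : ℂ => w - 1) ⁻¹' (ball (0:ℂ) 2), ENNReal.ofReal (‖1 - w‖⁻¹) :=
        lintegral_mono_set hsub
    _ = ∫⁻ v in ball (0:ℂ) 2, ENNReal.ofReal (‖v‖⁻¹) := by
        rw [← MeasurePreserving.setLIntegral_comp_preimage_emb hmp hemb
          (fun v => ENNReal.ofReal (‖v‖⁻¹)) (ball (0:ℂ) 2)]
        congr 1
        funext w
        rw [norm_sub_rev]
    _ < ⊤ := lintegral_inv_norm_lt_top

lemma IN_tendsto :
    Tendsto (fun N : ℕ => ∫⁻ w in ball (0:ℂ) 1, ENNReal.ofReal (‖w‖^(N+1) * ‖1 - w‖⁻¹))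
      atTop (nhds 0) := by
  have h0 : (0:ℝ≥0∞) = ∫⁻ _ in ball (0:ℂ) 1, (0:ℝ≥0∞) := by simp
  rw [h0]
  refine tendsto_lintegral_of_dominated_convergence
    (bound := fun w => ENNReal.ofReal (‖1 - w‖⁻¹)) ?_ ?_ ?_ ?_
  · intro n
    fun_prop
  · intro n
    filter_upwards [self_mem_ae_restrict measurableSet_ball] with w hw
    rw [mem_ball_zero_iff] at hw
    refine ENNReal.ofReal_le_ofReal ?_
    have h1 : ‖w‖^(n+1) ≤ 1 := pow_le_one₀ (norm_nonneg w) hw.le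
    have h2 : (0:ℝ) ≤ ‖1 - w‖⁻¹ := by positivity
    nlinarith
  · exact lintegral_inv_norm_one_sub_lt_top.ne
  · filter_upwards [self_mem_ae_restrict measurableSet_ball] with w hw
    rw [mem_ball_zero_iff] at hw
    have hpow : Tendsto (fun N : ℕ => ‖w‖^(N+1)) atTop (nhds 0) :=
      (tendsto_pow_atTop_nhds_zero_of_lt_one (norm_nonneg w) hw).comp
        (tendsto_add_atTop_nat 1)
    have : Tendsto (fun N : ℕ => ‖w‖^(N+1) * ‖1 - w‖⁻¹) atTop (nhds 0) := by
      simpa using hpow.mul_const (‖1 - w‖⁻¹)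
    have := ENNReal.tendsto_ofReal this
    simpa using this

section Cauchy
variable {f : ℂ → ℂ} {a : ℕ → ℂ}

lemma coeff_circleIntegral (hf : DifferentiableOn ℂ f (ball (0:ℂ) 1))
    (ha : ∀ z ∈ ball (0:ℂ) 1, HasSum (fun k => a k * z ^ k) (f z))
    {ρ : ℝ} (h0 : 0 < ρ) (h1 : ρ < 1) (k : ℕ) :
    (∮ w in C(0, ρ), (w^(k+1))⁻¹ • f w) = (2 * π * I : ℂ) • a k := by
  lift ρ to ℝ≥0 using h0.le with R hR
  have h0' : (0:ℝ≥0) < R := by exact_mod_cast h0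
  have hdc : DiffContOnCl ℂ f (ball (0:ℂ) (R:ℝ)) := by
    constructor
    · exact hf.mono (ball_subset_ball h1.le)
    · refine hf.continuousOn.mono ?_
      refine closure_ball_subset_closedBall.trans ?_
      exact closedBall_subset_ball h1
  have hps : HasFPowerSeriesOnBall f (cauchyPowerSeries f 0 (R:ℝ)) 0 R :=
    hdc.hasFPowerSeriesOnBall h0'
  set q : FormalMultilinearSeries ℂ ℂ ℂ :=
    fun n => ContinuousMultilinearMap.mkPiRing ℂ (Fin n) (a n) with hqdef
  have hq : HasFPowerSeriesOnBall f q 0 R := by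
    refine ⟨?_, by exact_mod_cast h0', ?_⟩
    · set ρ' : ℝ := (1 + (R:ℝ))/2 with hρ'
      have hρ'0 : 0 < ρ' := by positivity
      have hρ'1 : ρ' < 1 := by rw [hρ']; linarith
      have hRρ' : (R:ℝ) < ρ' := by rw [hρ']; linarith
      have hmem : (ρ' : ℂ) ∈ ball (0:ℂ) 1 := by
        rw [mem_ball_zero_iff, Complex.norm_real, Real.norm_of_nonneg hρ'0.le]
        exact hρ'1
      have hsum := ha _ hmem
      have htend : Tendsto (fun k => ‖a k * (ρ':ℂ)^k‖) atTop (nhds 0) := by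
        simpa using (hsum.summable.tendsto_atTop_zero).norm
      obtain ⟨C, hC⟩ := htend.bddAbove_range
      refine q.le_radius_of_bound C ?_
      intro n
      have hqn : ‖q n‖ = ‖a n‖ := ContinuousMultilinearMap.norm_mkPiRing (a n)
      have hCn : ‖a n‖ * ρ'^n ≤ C := by
        have := hC (Set.mem_range_self n)
        rwa [norm_mul, norm_pow, Complex.norm_real, Real.norm_of_nonneg hρ'0.le] at this
      refine le_trans ?_ hCn
      rw [hqn]
      refine mul_le_mul_of_nonneg_left ?_ (norm_nonneg _)
      exact pow_le_pow_left₀ (by positivity) hRρ'.le n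
    · intro y hy
      rw [mem_emetric_ball_zero_iff] at hy
      have hy1 : y ∈ ball (0:ℂ) 1 := by
        rw [mem_ball_zero_iff]
        have : (‖y‖₊ : ℝ) < (R:ℝ) := by exact_mod_cast hy
        calc ‖y‖ = (‖y‖₊ : ℝ) := by simp
          _ < (R:ℝ) := this
          _ < 1 := h1
      have hgoal : (fun n => q n fun _ => y) = fun n => a n * y^n := by
        funext n
        simp [hqdef, ContinuousMultilinearMap.mkPiRing_apply, mul_comm]
      simp only [zero_add]
      rw [hgoal]
      exact ha y hy1
  have heq : q = cauchyPowerSeries f 0 (R:ℝ) :=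
    hq.hasFPowerSeriesAt.eq_formalMultilinearSeries hps.hasFPowerSeriesAt
  have hak : a k = (2 * π * I : ℂ)⁻¹ • ∮ w in C(0, (R:ℝ)), (w^(k+1))⁻¹ • f w := by
    have happ := cauchyPowerSeries_apply f 0 (R:ℝ) k 1
    rw [← heq] at happ
    have hlhs : (q k fun _ => (1:ℂ)) = a k := by
      simp [hqdef, ContinuousMultilinearMap.mkPiRing_apply]
    rw [hlhs] at happ
    have hfun : (fun w : ℂ => ((1:ℂ) / (w - 0)) ^ k • (w - 0)⁻¹ • f w)
        = fun w : ℂ => (w^(k+1))⁻¹ • f w := by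
      funext w
      rw [sub_zero, smul_smul, one_div, inv_pow, ← mul_inv, ← pow_succ]
    rw [show (∮ z in C(0, (R:ℝ)), ((1:ℂ) / (z - 0)) ^ k • (z - 0)⁻¹ • f z)
        = ∮ w in C(0, (R:ℝ)), (w^(k+1))⁻¹ • f w from by rw [hfun]] at happ
    exact happ
  rw [hak, smul_inv_smul₀ Complex.two_pi_I_ne_zero]


lemma tail_formula (hf : DifferentiableOn ℂ f (ball (0:ℂ) 1))
    (ha : ∀ z ∈ ball (0:ℂ) 1, HasSum (fun k => a k * z ^ k) (f z))
    {ρ : ℝ} (h0 : 0 < ρ) (h1 : ρ < 1) (N : ℕ) {z : ℂ} (hz : z ∈ ball (0:ℂ) ρ) :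
    f z - ∑ k ∈ Finset.range (N+1), a k * z^k
      = (2 * π * I : ℂ)⁻¹ • ∮ w in C(0, ρ), ((z/w)^(N+1) * (w - z)⁻¹) • f w := by
  have hzρ : ‖z‖ < ρ := mem_ball_zero_iff.1 hz
  have hsphere_ball : sphere (0:ℂ) ρ ⊆ ball (0:ℂ) 1 := by
    intro w hw
    rw [mem_sphere_zero_iff_norm] at hw
    rw [mem_ball_zero_iff, hw]
    exact h1
  have hw0 : ∀ w ∈ sphere (0:ℂ) ρ, w ≠ 0 := by
    intro w hw
    rw [mem_sphere_zero_iff_norm] at hw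
    intro h
    rw [h] at hw
    simp at hw
    exact h0.ne' hw.symm
  have hwz : ∀ w ∈ sphere (0:ℂ) ρ, w ≠ z := by
    intro w hw
    rw [mem_sphere_zero_iff_norm] at hw
    intro h
    rw [h] at hw
    exact (lt_irrefl ρ) (hw ▸ hzρ)
  have hcf : ContinuousOn f (sphere (0:ℂ) ρ) := hf.continuousOn.mono hsphere_ball
  -- integrability facts
  have hInt1 : CircleIntegrable (fun w => (w - z)⁻¹ • f w) 0 ρ := by
    refine ContinuousOn.circleIntegrable h0.le ?_
    refine ContinuousOn.fun_smul ?_ hcf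
    refine ContinuousOn.inv₀ ((continuousOn_id.sub continuousOn_const)) ?_
    intro w hw
    exact sub_ne_zero.2 (hwz w hw)
  have hInt2 : ∀ k : ℕ, CircleIntegrable (fun w => (z^k * (w^(k+1))⁻¹) • f w) 0 ρ := by
    intro k
    refine ContinuousOn.circleIntegrable h0.le ?_
    refine ContinuousOn.fun_smul (ContinuousOn.mul continuousOn_const ?_) hcf
    refine ContinuousOn.inv₀ (continuousOn_pow _) ?_
    intro w hw
    exact pow_ne_zero _ (hw0 w hw)
  have hIntS : CircleIntegrable
      (fun w => (∑ k ∈ Finset.range (N+1), z^k * (w^(k+1))⁻¹) • f w) 0 ρ := by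
    refine ContinuousOn.circleIntegrable h0.le ?_
    refine ContinuousOn.fun_smul ?_ hcf
    refine continuousOn_finset_sum _ ?_
    intro k _
    refine ContinuousOn.mul continuousOn_const ?_
    refine ContinuousOn.inv₀ (continuousOn_pow _) ?_
    intro w hw
    exact pow_ne_zero _ (hw0 w hw)
  -- kernel identity on the sphere
  have hcong : EqOn (fun w : ℂ => ((z/w)^(N+1) * (w - z)⁻¹) • f w)
      (fun w : ℂ => ((w - z)⁻¹ - ∑ k ∈ Finset.range (N+1), z^k * (w^(k+1))⁻¹) • f w)
      (sphere (0:ℂ) ρ) := by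
    intro w hw
    have hw0' := hw0 w hw
    have hwz' := hwz w hw
    have hzw1 : z / w ≠ 1 := by
      intro h
      exact hwz' ((div_eq_one_iff_eq hw0').1 h).symm
    have hgeom := geom_sum_eq hzw1 (N+1)
    have hsum : ∑ k ∈ Finset.range (N+1), z^k * (w^(k+1))⁻¹
        = ((z/w)^(N+1) - 1)/(z/w - 1) * w⁻¹ := by
      rw [← hgeom, Finset.sum_mul]
      congr 1
      funext k
      rw [div_pow, div_mul_eq_mul_div, div_eq_mul_inv, pow_succ, mul_inv]
      ring
    simp only
    congr 1
    rw [hsum]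
    have hzw1' : z/w - 1 ≠ 0 := sub_ne_zero.2 hzw1
    have hmul : (z/w - 1) * w = z - w := by field_simp
    have hstep : ((z/w)^(N+1) - 1)/(z/w - 1) * w⁻¹ = ((z/w)^(N+1) - 1) * (z - w)⁻¹ := by
      rw [div_eq_mul_inv, mul_assoc, ← mul_inv, hmul]
    rw [hstep, show (z - w) = -(w - z) from by ring, inv_neg]
    ring
  -- Cauchy integral formula
  have hdc : DiffContOnCl ℂ f (ball (0:ℂ) ρ) := by
    constructor
    · exact hf.mono (ball_subset_ball h1.le)
    · exact hf.continuousOn.mono (closure_ball_subset_closedBall.trans (closedBall_subset_ball h1))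
  have hcauchy : (∮ w in C(0, ρ), (w - z)⁻¹ • f w) = (2 * π * I : ℂ) • f z :=
    hdc.circleIntegral_sub_inv_smul hz
  -- sum through the integral
  have hsum_int : (∮ w in C(0,ρ), (∑ k ∈ Finset.range (N+1), z^k * (w^(k+1))⁻¹) • f w)
      = ∑ k ∈ Finset.range (N+1), ∮ w in C(0,ρ), (z^k * (w^(k+1))⁻¹) • f w := by
    simp only [circleIntegral]
    rw [← intervalIntegral.integral_finset_sum]
    · congr 1
      funext θ
      rw [Finset.sum_smul, Finset.smul_sum]
    · intro k _
      exact (hInt2 k).out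
  have hcoeff := fun k => coeff_circleIntegral hf ha h0 h1 k
  have hterm : ∀ k, (∮ w in C(0,ρ), (z^k * (w^(k+1))⁻¹) • f w)
      = z^k • ((2*π*I:ℂ) • a k) := by
    intro k
    rw [← hcoeff k, ← circleIntegral.integral_smul (z^k) _ 0 ρ]
    congr 1
    funext w
    rw [smul_smul]
  have key : (∮ w in C(0,ρ), ((z/w)^(N+1) * (w - z)⁻¹) • f w)
      = (2*π*I:ℂ) • (f z - ∑ k ∈ Finset.range (N+1), a k * z^k) := by
    rw [circleIntegral.integral_congr h0.le hcong]
    have hsub : (fun w : ℂ => ((w - z)⁻¹ - ∑ k ∈ Finset.range (N+1), z^k * (w^(k+1))⁻¹) • f w)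
        = fun w : ℂ => (w - z)⁻¹ • f w - (∑ k ∈ Finset.range (N+1), z^k * (w^(k+1))⁻¹) • f w := by
      funext w
      rw [sub_smul]
    rw [hsub, circleIntegral.integral_sub hInt1 hIntS, hsum_int, hcauchy]
    simp_rw [hterm]
    rw [smul_sub]
    congr 1
    rw [Finset.smul_sum]
    congr 1
    funext k
    simp only [smul_eq_mul]
    ring
  rw [key, inv_smul_smul₀ Complex.two_pi_I_ne_zero]


lemma tail_bound (hf : DifferentiableOn ℂ f (ball (0:ℂ) 1))
    (ha : ∀ z ∈ ball (0:ℂ) 1, HasSum (fun k => a k * z ^ k) (f z))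
    {ρ : ℝ} (h0 : 0 < ρ) (h1 : ρ < 1) (N : ℕ) {z : ℂ} (hz : z ∈ ball (0:ℂ) ρ) :
    ‖f z - ∑ k ∈ Finset.range (N+1), a k * z^k‖
      ≤ (2*π)⁻¹ * ∫ θ in (0:ℝ)..(2*π),
          ‖f (circleMap 0 ρ θ)‖ * ((‖z‖/ρ)^(N+1) * ρ * ‖circleMap 0 ρ θ - z‖⁻¹) := by
  rw [tail_formula hf ha h0 h1 N hz, norm_smul]
  have h2π : ‖(2*π*I:ℂ)⁻¹‖ = (2*π)⁻¹ := by
    rw [norm_inv]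
    congr 1
    rw [show (2*π*I:ℂ) = ((2*π:ℝ):ℂ) * I from by push_cast; ring]
    rw [norm_mul, Complex.norm_real, Complex.norm_I, mul_one, Real.norm_of_nonneg (by positivity)]
  rw [h2π]
  refine mul_le_mul_of_nonneg_left ?_ (by positivity)
  rw [circleIntegral]
  refine (intervalIntegral.norm_integral_le_integral_norm (by positivity)).trans (le_of_eq ?_)
  refine intervalIntegral.integral_congr ?_
  intro θ _
  have habs : ‖circleMap 0 ρ θ‖ = ρ := by
    rw [norm_circleMap_zero, abs_of_pos h0]
  simp only [norm_smul, deriv_circleMap, norm_mul, norm_pow, norm_div, norm_inv, Complex.norm_I,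
    mul_one, habs]
  ring


lemma ball_rho_bound (hf : DifferentiableOn ℂ f (ball (0:ℂ) 1))
    (ha : ∀ z ∈ ball (0:ℂ) 1, HasSum (fun k => a k * z ^ k) (f z))
    {M : ℝ}
    (hM : ∀ r ∈ Set.Ico (0:ℝ) 1,
      (1 / (2 * π)) * ∫ θ in (0:ℝ)..(2 * π),
          ‖f ((r : ℂ) * Complex.exp ((θ : ℂ) * Complex.I))‖ ≤ M)
    {ρ : ℝ} (h0 : 0 < ρ) (h1 : ρ < 1) (N : ℕ) :
    ∫⁻ z in ball (0:ℂ) ρ, ENNReal.ofReal ‖f z - ∑ k ∈ Finset.range (N+1), a k * z^k‖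
      ≤ ENNReal.ofReal M
        * ∫⁻ w in ball (0:ℂ) 1, ENNReal.ofReal (‖w‖^(N+1) * ‖1 - w‖⁻¹) := by
  have h2π : (0:ℝ) < 2*π := by positivity
  set IN : ℝ≥0∞ := ∫⁻ w in ball (0:ℂ) 1, ENNReal.ofReal (‖w‖^(N+1) * ‖1 - w‖⁻¹) with hIN
  have hfc : Continuous fun θ : ℝ => ‖f (circleMap 0 ρ θ)‖ := by
    refine Continuous.norm ?_
    refine ContinuousOn.comp_continuous hf.continuousOn (continuous_circleMap 0 ρ) ?_
    intro θ
    rw [mem_ball_zero_iff, norm_circleMap_zero, abs_of_pos h0]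
    exact h1
  have hQmeas : Measurable fun p : ℂ × ℝ =>
      ENNReal.ofReal ((‖p.1‖/ρ)^(N+1) * ρ * ‖circleMap 0 ρ p.2 - p.1‖⁻¹) := by
    refine Measurable.ennreal_ofReal ?_
    refine Measurable.mul ?_ ?_
    · exact (((continuous_norm.comp continuous_fst).div_const ρ).pow _ |>.mul
        continuous_const).measurable
    · exact (((continuous_circleMap 0 ρ).comp continuous_snd |>.sub
        continuous_fst).norm.measurable).inv
  have hFmeas : Measurable fun p : ℂ × ℝ =>
      ENNReal.ofReal (‖f (circleMap 0 ρ p.2)‖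
        * ((‖p.1‖/ρ)^(N+1) * ρ * ‖circleMap 0 ρ p.2 - p.1‖⁻¹)) := by
    have heq : (fun p : ℂ × ℝ =>
        ENNReal.ofReal (‖f (circleMap 0 ρ p.2)‖
          * ((‖p.1‖/ρ)^(N+1) * ρ * ‖circleMap 0 ρ p.2 - p.1‖⁻¹)))
        = fun p : ℂ × ℝ => ENNReal.ofReal ‖f (circleMap 0 ρ p.2)‖
            * ENNReal.ofReal ((‖p.1‖/ρ)^(N+1) * ρ * ‖circleMap 0 ρ p.2 - p.1‖⁻¹) := by
      funext p
      exact ENNReal.ofReal_mul (norm_nonneg _)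
    rw [heq]
    exact ((hfc.comp continuous_snd).measurable.ennreal_ofReal).mul hQmeas
  have hpt : ∀ z ∈ ball (0:ℂ) ρ,
      ENNReal.ofReal ‖f z - ∑ k ∈ Finset.range (N+1), a k * z^k‖
        ≤ ENNReal.ofReal ((2*π)⁻¹) * ∫⁻ θ in Ioc (0:ℝ) (2*π),
            ENNReal.ofReal (‖f (circleMap 0 ρ θ)‖
              * ((‖z‖/ρ)^(N+1) * ρ * ‖circleMap 0 ρ θ - z‖⁻¹)) := by
    intro z hz
    have hPcont : Continuous fun θ => ‖f (circleMap 0 ρ θ)‖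
        * ((‖z‖/ρ)^(N+1) * ρ * ‖circleMap 0 ρ θ - z‖⁻¹) := by
      refine hfc.mul ?_
      refine Continuous.mul continuous_const ?_
      refine Continuous.inv₀ ?_ ?_
      · exact ((continuous_circleMap 0 ρ).sub continuous_const).norm
      · intro θ
        rw [norm_ne_zero_iff, sub_ne_zero]
        exact circleMap_ne_mem_ball hz θ
    have hPint : IntegrableOn (fun θ => ‖f (circleMap 0 ρ θ)‖
        * ((‖z‖/ρ)^(N+1) * ρ * ‖circleMap 0 ρ θ - z‖⁻¹)) (Ioc (0:ℝ) (2*π)) volume :=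
      hPcont.integrableOn_Ioc
    have hPpos : ∀ θ : ℝ, 0 ≤ ‖f (circleMap 0 ρ θ)‖
        * ((‖z‖/ρ)^(N+1) * ρ * ‖circleMap 0 ρ θ - z‖⁻¹) := by
      intro θ
      positivity
    have h1' := tail_bound hf ha h0 h1 N hz
    refine (ENNReal.ofReal_le_ofReal h1').trans (le_of_eq ?_)
    rw [intervalIntegral.integral_of_le h2π.le]
    rw [ENNReal.ofReal_mul (by positivity)]
    rw [ofReal_integral_eq_lintegral_ofReal hPint (ae_of_all _ hPpos)]
  have hsw : (∫⁻ z in ball (0:ℂ) ρ, ∫⁻ θ in Ioc (0:ℝ) (2*π),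
        ENNReal.ofReal (‖f (circleMap 0 ρ θ)‖
          * ((‖z‖/ρ)^(N+1) * ρ * ‖circleMap 0 ρ θ - z‖⁻¹)))
      = ∫⁻ θ in Ioc (0:ℝ) (2*π), ∫⁻ z in ball (0:ℂ) ρ,
          ENNReal.ofReal (‖f (circleMap 0 ρ θ)‖
            * ((‖z‖/ρ)^(N+1) * ρ * ‖circleMap 0 ρ θ - z‖⁻¹)) :=
    lintegral_lintegral_swap hFmeas.aemeasurable
  have hinner : ∀ θ : ℝ, (∫⁻ z in ball (0:ℂ) ρ,
        ENNReal.ofReal (‖f (circleMap 0 ρ θ)‖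
          * ((‖z‖/ρ)^(N+1) * ρ * ‖circleMap 0 ρ θ - z‖⁻¹)))
      = ENNReal.ofReal ‖f (circleMap 0 ρ θ)‖ * (ENNReal.ofReal (ρ^2) * IN) := by
    intro θ
    have hcnorm : ‖circleMap 0 ρ θ‖ = ρ := by
      rw [norm_circleMap_zero, abs_of_pos h0]
    have hc0 : circleMap 0 ρ θ ≠ 0 := by
      intro h
      rw [h, norm_zero] at hcnorm
      exact h0.ne' hcnorm.symm
    have hsm : Measurable fun z : ℂ =>
        ENNReal.ofReal ((‖z‖/ρ)^(N+1) * ρ * ‖circleMap 0 ρ θ - z‖⁻¹) := by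
      refine Measurable.ennreal_ofReal ?_
      refine Measurable.mul ?_ ?_
      · exact (((continuous_norm.div_const ρ).pow _).mul continuous_const).measurable
      · exact ((continuous_const.sub continuous_id).norm.measurable).inv
    calc (∫⁻ z in ball (0:ℂ) ρ,
          ENNReal.ofReal (‖f (circleMap 0 ρ θ)‖
            * ((‖z‖/ρ)^(N+1) * ρ * ‖circleMap 0 ρ θ - z‖⁻¹)))
        = ∫⁻ z in ball (0:ℂ) ρ,
            ENNReal.ofReal ‖f (circleMap 0 ρ θ)‖
              * ENNReal.ofReal ((‖z‖/ρ)^(N+1) * ρ * ‖circleMap 0 ρ θ - z‖⁻¹) := by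
          congr 1
          funext z
          exact ENNReal.ofReal_mul (norm_nonneg _)
      _ = ENNReal.ofReal ‖f (circleMap 0 ρ θ)‖
            * ∫⁻ z in ball (0:ℂ) ρ,
                ENNReal.ofReal ((‖z‖/ρ)^(N+1) * ρ * ‖circleMap 0 ρ θ - z‖⁻¹) :=
          lintegral_const_mul' _ _ ENNReal.ofReal_ne_top
      _ = ENNReal.ofReal ‖f (circleMap 0 ρ θ)‖ * (ENNReal.ofReal (ρ^2) * IN) := by
          congr 1
          have hball : ball (0:ℂ) ρ = ball (0:ℂ) ‖circleMap 0 ρ θ‖ := by rw [hcnorm]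
          rw [hball, lintegral_ball_comp_mul _ hc0 hsm, hcnorm]
          congr 1
          refine setLIntegral_congr_fun measurableSet_ball (fun w _ => ?_)
          congr 1
          have e1 : ‖circleMap 0 ρ θ * w‖ = ρ * ‖w‖ := by rw [norm_mul, hcnorm]
          have e2 : circleMap 0 ρ θ - circleMap 0 ρ θ * w = circleMap 0 ρ θ * (1 - w) := by ring
          rw [e1, e2, norm_mul, hcnorm]
          rw [mul_comm ρ ‖w‖, mul_div_assoc, div_self h0.ne', mul_one, mul_inv]
          rw [mul_assoc, ← mul_assoc ρ, mul_inv_cancel₀ h0.ne', one_mul]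
  have hf_int : IntegrableOn (fun θ => ‖f (circleMap 0 ρ θ)‖) (Ioc (0:ℝ) (2*π)) volume :=
    hfc.integrableOn_Ioc
  have houter : (∫⁻ θ in Ioc (0:ℝ) (2*π), ENNReal.ofReal ‖f (circleMap 0 ρ θ)‖)
      ≤ ENNReal.ofReal (2*π*M) := by
    rw [← ofReal_integral_eq_lintegral_ofReal hf_int (ae_of_all _ fun θ => norm_nonneg _)]
    refine ENNReal.ofReal_le_ofReal ?_
    have hs := hM ρ ⟨h0.le, h1⟩
    have hid : (∫ θ in (0:ℝ)..(2*π), ‖f ((ρ:ℂ) * Complex.exp ((θ:ℂ) * Complex.I))‖)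
        = ∫ θ in Ioc (0:ℝ) (2*π), ‖f (circleMap 0 ρ θ)‖ := by
      rw [intervalIntegral.integral_of_le h2π.le]
      congr 1
      funext θ
      rw [circleMap_zero]
    rw [hid] at hs
    set S := ∫ θ in Ioc (0:ℝ) (2*π), ‖f (circleMap 0 ρ θ)‖ with hS
    have hS2 : S = 2*π * (1/(2*π) * S) := by field_simp
    rw [hS2]
    calc 2*π * (1/(2*π) * S) ≤ 2*π * M :=
          mul_le_mul_of_nonneg_left hs (by positivity)
      _ = 2*π*M := by ring
  calc ∫⁻ z in ball (0:ℂ) ρ, ENNReal.ofReal ‖f z - ∑ k ∈ Finset.range (N+1), a k * z^k‖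
      ≤ ∫⁻ z in ball (0:ℂ) ρ,
          ENNReal.ofReal ((2*π)⁻¹) * ∫⁻ θ in Ioc (0:ℝ) (2*π),
            ENNReal.ofReal (‖f (circleMap 0 ρ θ)‖
              * ((‖z‖/ρ)^(N+1) * ρ * ‖circleMap 0 ρ θ - z‖⁻¹)) := by
        refine setLIntegral_mono ?_ hpt
        refine Measurable.const_mul ?_ _
        exact Measurable.lintegral_prod_right hFmeas
    _ = ENNReal.ofReal ((2*π)⁻¹)
        * ∫⁻ z in ball (0:ℂ) ρ, ∫⁻ θ in Ioc (0:ℝ) (2*π),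
            ENNReal.ofReal (‖f (circleMap 0 ρ θ)‖
              * ((‖z‖/ρ)^(N+1) * ρ * ‖circleMap 0 ρ θ - z‖⁻¹)) :=
        lintegral_const_mul' _ _ ENNReal.ofReal_ne_top
    _ = ENNReal.ofReal ((2*π)⁻¹)
        * ∫⁻ θ in Ioc (0:ℝ) (2*π), ∫⁻ z in ball (0:ℂ) ρ,
            ENNReal.ofReal (‖f (circleMap 0 ρ θ)‖
              * ((‖z‖/ρ)^(N+1) * ρ * ‖circleMap 0 ρ θ - z‖⁻¹)) := by rw [hsw]
    _ = ENNReal.ofReal ((2*π)⁻¹)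
        * ∫⁻ θ in Ioc (0:ℝ) (2*π),
            ENNReal.ofReal ‖f (circleMap 0 ρ θ)‖ * (ENNReal.ofReal (ρ^2) * IN) := by
        congr 1
        exact lintegral_congr fun θ => hinner θ
    _ = ENNReal.ofReal ((2*π)⁻¹)
        * ((∫⁻ θ in Ioc (0:ℝ) (2*π), ENNReal.ofReal ‖f (circleMap 0 ρ θ)‖)
            * (ENNReal.ofReal (ρ^2) * IN)) := by
        rw [lintegral_mul_const _ ((hfc.measurable).ennreal_ofReal)]
    _ ≤ ENNReal.ofReal ((2*π)⁻¹) * (ENNReal.ofReal (2*π*M) * (ENNReal.ofReal (ρ^2) * IN)) :=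
        mul_le_mul_right (mul_le_mul_left houter _) _
    _ ≤ ENNReal.ofReal M * IN := by
        have h1' : ENNReal.ofReal ((2*π)⁻¹) * ENNReal.ofReal (2*π*M) = ENNReal.ofReal M := by
          rw [← ENNReal.ofReal_mul (by positivity)]
          congr 1
          field_simp
        have h2' : ENNReal.ofReal (ρ^2) ≤ 1 := ENNReal.ofReal_le_one.2 (by nlinarith)
        calc ENNReal.ofReal ((2*π)⁻¹) * (ENNReal.ofReal (2*π*M) * (ENNReal.ofReal (ρ^2) * IN))
            = (ENNReal.ofReal ((2*π)⁻¹) * ENNReal.ofReal (2*π*M))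
                * (ENNReal.ofReal (ρ^2) * IN) := by ring
          _ = ENNReal.ofReal M * (ENNReal.ofReal (ρ^2) * IN) := by rw [h1']
          _ ≤ ENNReal.ofReal M * (1 * IN) := by
              exact mul_le_mul_right (mul_le_mul_left h2' _) _
          _ = ENNReal.ofReal M * IN := by rw [one_mul]

end Cauchy

theorem partial_sums_converge_in_A1 (f : ℂ → ℂ) (a : ℕ → ℂ)
    (hf : DifferentiableOn ℂ f (ball (0 : ℂ) 1))
    (ha : ∀ z ∈ ball (0 : ℂ) 1, HasSum (fun k => a k * z ^ k) (f z))
    (hH1 : ∃ M : ℝ, ∀ r ∈ Set.Ico (0 : ℝ) 1,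
      (1 / (2 * π)) * ∫ θ in (0 : ℝ)..(2 * π),
          ‖f ((r : ℂ) * Complex.exp ((θ : ℂ) * Complex.I))‖ ≤ M) :
    Tendsto (fun N : ℕ =>
        ∫ z in ball (0 : ℂ) 1, ‖(∑ k ∈ Finset.range (N + 1), a k * z ^ k) - f z‖)
      atTop (nhds 0) := by
  obtain ⟨M, hM⟩ := hH1
  set IN : ℕ → ℝ≥0∞ :=
    fun N => ∫⁻ w in ball (0:ℂ) 1, ENNReal.ofReal (‖w‖^(N+1) * ‖1 - w‖⁻¹) with hINdef
  -- the tail function is continuous on the ball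
  have hTcont : ∀ N : ℕ, ContinuousOn
      (fun z => f z - ∑ k ∈ Finset.range (N+1), a k * z^k) (ball (0:ℂ) 1) := by
    intro N
    refine hf.continuousOn.sub ?_
    exact (continuous_finset_sum _ fun k _ =>
      continuous_const.mul (continuous_pow k)).continuousOn
  -- radii
  have hrad : ∀ n : ℕ, (0:ℝ) < 1 - 1/((n:ℝ)+2) ∧ (1 - 1/((n:ℝ)+2) : ℝ) < 1 := by
    intro n
    have hpos : (0:ℝ) < (n:ℝ) + 2 := by positivity
    have h1n : (1:ℝ)/((n:ℝ)+2) ≤ 1/2 := by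
      rw [div_le_div_iff₀ hpos two_pos]
      have : (0:ℝ) ≤ (n:ℝ) := Nat.cast_nonneg n
      linarith
    have h0n : (0:ℝ) < 1/((n:ℝ)+2) := by positivity
    exact ⟨by linarith, by linarith⟩
  -- bound over the full unit ball
  have hball1 : ∀ N : ℕ,
      (∫⁻ z in ball (0:ℂ) 1, ENNReal.ofReal ‖f z - ∑ k ∈ Finset.range (N+1), a k * z^k‖)
        ≤ ENNReal.ofReal M * IN N := by
    intro N
    set g : ℂ → ℝ≥0∞ :=
      fun z => ENNReal.ofReal ‖f z - ∑ k ∈ Finset.range (N+1), a k * z^k‖ with hg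
    set s : ℕ → Set ℂ := fun n => ball (0:ℂ) (1 - 1/((n:ℝ)+2)) with hs
    have hsub : ∀ n, s n ⊆ ball (0:ℂ) 1 := fun n => ball_subset_ball (hrad n).2.le
    have hgcont : ContinuousOn g (ball (0:ℂ) 1) :=
      ENNReal.continuous_ofReal.comp_continuousOn (hTcont N).norm
    have hgae : ∀ n, AEMeasurable ((s n).indicator g) volume := by
      intro n
      rw [aemeasurable_indicator_iff measurableSet_ball]
      exact (hgcont.mono (hsub n)).aemeasurable measurableSet_ball
    have hmono : ∀ z : ℂ, Monotone fun n => (s n).indicator g z := by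
      intro z n m hnm
      refine Set.indicator_le_indicator_of_subset ?_ (fun _ => zero_le) z
      refine ball_subset_ball ?_
      have : (1:ℝ)/((m:ℝ)+2) ≤ 1/((n:ℝ)+2) := by
        apply one_div_le_one_div_of_le (by positivity)
        have : (n:ℝ) ≤ (m:ℝ) := by exact_mod_cast hnm
        linarith
      linarith
    have hsup : ∀ z : ℂ, (⨆ n, (s n).indicator g z) = (ball (0:ℂ) 1).indicator g z := by
      intro z
      by_cases hz : z ∈ ball (0:ℂ) 1
      · rw [Set.indicator_of_mem hz]
        refine le_antisymm (iSup_le fun n => ?_) ?_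
        · by_cases hzn : z ∈ s n
          · rw [Set.indicator_of_mem hzn]
          · rw [Set.indicator_of_notMem hzn]
            exact zero_le
        · have hz1 : ‖z‖ < 1 := mem_ball_zero_iff.1 hz
          obtain ⟨n, hn⟩ := exists_nat_one_div_lt (show (0:ℝ) < 1 - ‖z‖ by linarith)
          have hzn : z ∈ s n := by
            rw [hs]
            simp only [mem_ball_zero_iff]
            have : (1:ℝ)/((n:ℝ)+2) ≤ 1/((n:ℝ)+1) := by
              apply one_div_le_one_div_of_le (by positivity)
              linarith
            have hn' : 1/((n:ℝ)+1) < 1 - ‖z‖ := hn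
            linarith
          exact le_iSup_of_le n (le_of_eq (Set.indicator_of_mem hzn g).symm)
      · rw [Set.indicator_of_notMem hz]
        refine le_antisymm (iSup_le fun n => ?_) (zero_le)
        rw [Set.indicator_of_notMem (fun h => hz (hsub n h))]
    calc (∫⁻ z in ball (0:ℂ) 1, g z)
        = ∫⁻ z, (ball (0:ℂ) 1).indicator g z := by
          rw [lintegral_indicator measurableSet_ball]
      _ = ∫⁻ z, ⨆ n, (s n).indicator g z := by
          congr 1
          funext z
          rw [hsup z]
      _ = ⨆ n, ∫⁻ z, (s n).indicator g z :=
          lintegral_iSup' hgae (ae_of_all _ hmono)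
      _ = ⨆ n, ∫⁻ z in s n, g z := by
          congr 1
          funext n
          rw [lintegral_indicator measurableSet_ball]
      _ ≤ ENNReal.ofReal M * IN N :=
          iSup_le fun n => ball_rho_bound hf ha hM (hrad n).1 (hrad n).2 N
  -- convert Bochner integrals
  have hconv : ∀ N : ℕ,
      (∫ z in ball (0:ℂ) 1, ‖(∑ k ∈ Finset.range (N+1), a k * z^k) - f z‖)
        = (∫⁻ z in ball (0:ℂ) 1,
            ENNReal.ofReal ‖f z - ∑ k ∈ Finset.range (N+1), a k * z^k‖).toReal := by
    intro N
    have hmeas : AEStronglyMeasurable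
        (fun z => ‖f z - ∑ k ∈ Finset.range (N+1), a k * z^k‖)
        (volume.restrict (ball (0:ℂ) 1)) :=
      ((hTcont N).norm).aestronglyMeasurable measurableSet_ball
    have heq : (fun z : ℂ => ‖(∑ k ∈ Finset.range (N+1), a k * z^k) - f z‖)
        = fun z : ℂ => ‖f z - ∑ k ∈ Finset.range (N+1), a k * z^k‖ := by
      funext z
      rw [norm_sub_rev]
    rw [heq]
    rw [integral_eq_lintegral_of_nonneg_ae (ae_of_all _ fun z => norm_nonneg _) hmeas]
  -- finiteness
  have hINle : ∀ N : ℕ, IN N ≤ ∫⁻ w in ball (0:ℂ) 1, ENNReal.ofReal (‖1 - w‖⁻¹) := by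
    intro N
    refine setLIntegral_mono (by fun_prop) ?_
    intro w hw
    rw [mem_ball_zero_iff] at hw
    refine ENNReal.ofReal_le_ofReal ?_
    have h1 : ‖w‖^(N+1) ≤ 1 := pow_le_one₀ (norm_nonneg w) hw.le
    have h2 : (0:ℝ) ≤ ‖1 - w‖⁻¹ := by positivity
    nlinarith
  have hINtop : ∀ N : ℕ, ENNReal.ofReal M * IN N ≠ ⊤ := by
    intro N
    exact (ENNReal.mul_lt_top ENNReal.ofReal_lt_top
      ((hINle N).trans_lt lintegral_inv_norm_one_sub_lt_top)).ne
  -- limit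
  have hlim : Tendsto (fun N => (ENNReal.ofReal M * IN N).toReal) atTop (nhds 0) := by
    have h1 : Tendsto (fun N => ENNReal.ofReal M * IN N) atTop (nhds 0) := by
      have := ENNReal.Tendsto.const_mul (a := ENNReal.ofReal M) IN_tendsto
        (Or.inr (ENNReal.ofReal_ne_top (r := M)))
      simpa only [mul_zero] using this
    have h2 := (ENNReal.tendsto_toReal (a := 0) (by simp)).comp h1
    rw [ENNReal.toReal_zero] at h2
    exact h2
  refine squeeze_zero (fun N => integral_nonneg fun z => norm_nonneg _) ?_ hlim
  intro N
  rw [hconv N]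
  exact ENNReal.toReal_mono (hINtop N) (hball1 N)
end
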